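/- arXiv:2201.06284 — 7 statements merged into one kernel-verified Lean document; each statement's English description precedes it below -/
import Mathlib

section
/- In a ring R, elements a, b form a right coprime pair (aR + bR = R) if and only if the left annihilators satisfy l(a) ∩ l(b) = 0 and the left submodule R·(a,b) is a direct summand of R ⊕ R. -/
/-- `(a,b)` is a right coprime pair (`aR + bR = R`) iff the left annihilators satisfy
`l(a) ∩ l(b) = 0` and the cyclic left submodule `R·(a,b)` is a direct summand of `R ⊕ R`. -/
theorem rightCoprime_iff_annihilator_and_summand {R : Type*} [Ring R] (a b : R) :
    (∃ r s : R, a * r + b * s = 1) ↔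
      ((∀ x : R, x * a = 0 → x * b = 0 → x = 0) ∧
        ∃ q : Submodule R (R × R), IsCompl (Submodule.span R {((a, b) : R × R)}) q) := by
  constructor
  · rintro ⟨r, s, hrs⟩
    constructor
    · intro x hxa hxb
      have h : x * (a * r + b * s) = 0 := by
        rw [mul_add, ← mul_assoc, ← mul_assoc, hxa, hxb, zero_mul, zero_mul, add_zero]
      rwa [hrs, mul_one] at h
    · set p := Submodule.span R {((a, b) : R × R)} with hp
      have hab : ((a, b) : R × R) ∈ p := Submodule.mem_span_singleton_self _
      let f : (R × R) →ₗ[R] p :=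
        { toFun := fun v => ⟨(v.1 * r + v.2 * s) • ((a, b) : R × R),
            Submodule.smul_mem _ _ hab⟩
          map_add' := by
            intro v w
            ext
            · show (((v + w).1 * r + (v + w).2 * s) • ((a, b) : R × R)).1 =
                ((v.1 * r + v.2 * s) • ((a, b) : R × R) +
                  (w.1 * r + w.2 * s) • ((a, b) : R × R)).1
              simp [add_mul]
              abel
            · show (((v + w).1 * r + (v + w).2 * s) • ((a, b) : R × R)).2 =
                ((v.1 * r + v.2 * s) • ((a, b) : R × R) +
                  (w.1 * r + w.2 * s) • ((a, b) : R × R)).2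
              simp [add_mul]
              abel
          map_smul' := by
            intro c v
            ext
            · show (((c • v).1 * r + (c • v).2 * s) • ((a, b) : R × R)).1 =
                (c • ((v.1 * r + v.2 * s) • ((a, b) : R × R))).1
              simp [mul_add, add_mul, mul_assoc, smul_smul]
            · show (((c • v).1 * r + (c • v).2 * s) • ((a, b) : R × R)).2 =
                (c • ((v.1 * r + v.2 * s) • ((a, b) : R × R))).2
              simp [mul_add, add_mul, mul_assoc, smul_smul] }
      refine ⟨LinearMap.ker f, LinearMap.isCompl_of_proj ?_⟩
      rintro ⟨x, hx⟩
      obtain ⟨t, rfl⟩ := Submodule.mem_span_singleton.mp hx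
      have hscal : t • ((a, b) : R × R) = ((t * a, t * b) : R × R) := rfl
      apply Subtype.ext
      show ((t * a) * r + (t * b) * s) • ((a, b) : R × R) = t • ((a, b) : R × R)
      rw [mul_assoc, mul_assoc, ← mul_add, hrs, mul_one]
  · rintro ⟨hann, q, hq⟩
    have htop : ∀ v : R × R, v ∈ Submodule.span R {((a, b) : R × R)} ⊔ q := by
      intro v; rw [hq.sup_eq_top]; trivial
    obtain ⟨p1, hp1, w1, hw1, hsum1⟩ := Submodule.mem_sup.mp (htop (1, 0))
    obtain ⟨p2, hp2, w2, hw2, hsum2⟩ := Submodule.mem_sup.mp (htop (0, 1))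
    obtain ⟨t, rfl⟩ := Submodule.mem_span_singleton.mp hp1
    obtain ⟨t', rfl⟩ := Submodule.mem_span_singleton.mp hp2
    refine ⟨t, t', ?_⟩
    have hdecomp : (a * t + b * t') • ((a, b) : R × R) + (a • w1 + b • w2) =
        ((a, b) : R × R) := by
      have h1 : a • (t • ((a, b) : R × R) + w1) + b • (t' • ((a, b) : R × R) + w2) =
          ((a, b) : R × R) := by
        rw [hsum1, hsum2]
        simp [Prod.ext_iff]
      rw [smul_add, smul_add, smul_smul, smul_smul] at h1
      rw [add_smul]
      conv_rhs => rw [← h1]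
      abel
    have hmem : ((a * t + b * t' - 1) • ((a, b) : R × R)) ∈
        Submodule.span R {((a, b) : R × R)} ⊓ q := by
      constructor
      · exact Submodule.smul_mem _ _ (Submodule.mem_span_singleton_self _)
      · have : (a * t + b * t' - 1) • ((a, b) : R × R) = -(a • w1 + b • w2) := by
          rw [eq_neg_iff_add_eq_zero, sub_smul, one_smul, sub_add_eq_add_sub,
            hdecomp, sub_self]
        rw [this]
        exact neg_mem (Submodule.add_mem _ (Submodule.smul_mem _ _ hw1)
          (Submodule.smul_mem _ _ hw2))
    have hzero : (a * t + b * t' - 1) • ((a, b) : R × R) = 0 := by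
      have := hq.disjoint
      rw [disjoint_iff] at this
      rw [this] at hmem
      exact hmem
    have hza : (a * t + b * t' - 1) * a = 0 := congrArg Prod.fst hzero
    have hzb : (a * t + b * t' - 1) * b = 0 := congrArg Prod.snd hzero
    have := hann _ hza hzb
    rwa [sub_eq_zero] at this
end

section
/- Let R be a ring and a, b ∈ R such that l(a) ∩ l(b) = 0, r(r) ∩ r(s) = 0 for some r, s ∈ R, and the matrix [[ra, rb],[sa, sb]] is idempotent. Then ar + bs = 1, i.e. (a,b) is a right coprime pair. -/
/-- If `l(a) ∩ l(b) = 0`, `r(r) ∩ r(s) = 0` and the matrix `[[ra, rb],[sa, sb]]` is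
idempotent, then `ar + bs = 1`, i.e. `(a,b)` is a right coprime pair. -/
theorem bezout_of_matrix_isIdempotent {R : Type*} [Ring R] (a b r s : R)
    (hl : ∀ x : R, x * a = 0 → x * b = 0 → x = 0)
    (hr : ∀ x : R, r * x = 0 → s * x = 0 → x = 0)
    (hM : IsIdempotentElem (!![r * a, r * b; s * a, s * b])) :
    a * r + b * s = 1 := by
  have h := hM
  unfold IsIdempotentElem at h
  have h00 := congrFun (congrFun h 0) 0
  have h01 := congrFun (congrFun h 0) 1
  have h10 := congrFun (congrFun h 1) 0
  have h11 := congrFun (congrFun h 1) 1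
  simp [Matrix.mul_apply, Fin.sum_univ_two] at h00 h01 h10 h11
  have hra : r * (a * r + b * s - 1) * a = 0 := by
    have : r * (a * r + b * s - 1) * a
        = r * a * (r * a) + r * b * (s * a) - r * a := by noncomm_ring
    rw [this, h00, sub_self]
  have hrb : r * (a * r + b * s - 1) * b = 0 := by
    have : r * (a * r + b * s - 1) * b
        = r * a * (r * b) + r * b * (s * b) - r * b := by noncomm_ring
    rw [this, h01, sub_self]
  have hsa : s * (a * r + b * s - 1) * a = 0 := by
    have : s * (a * r + b * s - 1) * a
        = s * a * (r * a) + s * b * (s * a) - s * a := by noncomm_ring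
    rw [this, h10, sub_self]
  have hsb : s * (a * r + b * s - 1) * b = 0 := by
    have : s * (a * r + b * s - 1) * b
        = s * a * (r * b) + s * b * (s * b) - s * b := by noncomm_ring
    rw [this, h11, sub_self]
  have h1 : r * (a * r + b * s - 1) = 0 := hl _ hra hrb
  have h2 : s * (a * r + b * s - 1) = 0 := hl _ hsa hsb
  have h3 : a * r + b * s - 1 = 0 := hr _ h1 h2
  exact sub_eq_zero.mp h3
end

section
/- In a von Neumann regular ring R, elements a, b form a right coprime pair (aR + bR = R) if and only if l(a) ∩ l(b) = 0. -/
/-- In a von Neumann regular ring, `(a,b)` is a right coprime pair (`aR + bR = R`)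
iff `l(a) ∩ l(b) = 0`. -/
theorem rightCoprime_iff_annihilator_of_vonNeumannRegular {R : Type*} [Ring R]
    (hreg : ∀ x : R, ∃ y : R, x * y * x = x) (a b : R) :
    (∃ r s : R, a * r + b * s = 1) ↔ (∀ x : R, x * a = 0 → x * b = 0 → x = 0) := by
  constructor
  · rintro ⟨r, s, h⟩ x hxa hxb
    have hx : x * (a * r + b * s) = x := by rw [h, mul_one]
    rw [mul_add, ← mul_assoc, ← mul_assoc, hxa, hxb, zero_mul, zero_mul, add_zero] at hx
    exact hx.symm
  · intro h
    obtain ⟨y, hy⟩ := hreg a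
    obtain ⟨z, hz⟩ := hreg (b - a * y * b)
    set c := b - a * y * b with hc
    set e := a * y + c * z - c * z * (a * y) with he
    have hea : e * a = a := by
      calc (a * y + c * z - c * z * (a * y)) * a
          = a * y * a + c * z * a - c * z * (a * y * a) := by noncomm_ring
        _ = a + c * z * a - c * z * a := by rw [hy]
        _ = a := by noncomm_ring
    have heb : e * b = b := by
      calc (a * y + c * z - c * z * (a * y)) * b
          = a * y * b + c * z * (b - a * y * b) := by noncomm_ring
        _ = a * y * b + c * z * c := by rw [← hc]
        _ = a * y * b + c := by rw [hz]
        _ = b := by rw [hc]; noncomm_ring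
    have h1e : (1 : R) - e = 0 := by
      apply h
      · rw [sub_mul, one_mul, hea, sub_self]
      · rw [sub_mul, one_mul, heb, sub_self]
    have he1 : e = 1 := (sub_eq_zero.mp h1e).symm
    refine ⟨y - y * b * z * (1 - a * y), z * (1 - a * y), ?_⟩
    have key : a * (y - y * b * z * (1 - a * y)) + b * (z * (1 - a * y)) = e := by
      rw [he, hc]; noncomm_ring
    rw [key, he1]
end

section
/- A right coprime pair (a,b) in R is minimal in the poset of right coprime pairs (ordered by (a,b) ≤ (a',b') iff aR ⊆ a'R and bR ⊆ b'R, up to the equivalence aR = a'R and bR = b'R) if and only if there exists an idempotent e ∈ R with aR = eR and bR = (1-e)R. -/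
/-- The cyclic right ideal `aR`, as a submodule of `R` over `Rᵐᵒᵖ`. -/
def rspan (R : Type*) [Ring R] (a : R) : Submodule Rᵐᵒᵖ R := Submodule.span Rᵐᵒᵖ {a}

lemma mem_rspan_iff {R : Type*} [Ring R] {a x : R} :
    x ∈ rspan R a ↔ ∃ r : R, a * r = x := by
  rw [rspan, Submodule.mem_span_singleton]
  constructor
  · rintro ⟨c, rfl⟩
    exact ⟨c.unop, by simp [MulOpposite.smul_eq_mul_unop]⟩
  · rintro ⟨r, rfl⟩
    exact ⟨MulOpposite.op r, by simp [MulOpposite.smul_eq_mul_unop]⟩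

lemma rspan_le_iff {R : Type*} [Ring R] {a c : R} :
    rspan R c ≤ rspan R a ↔ ∃ r : R, a * r = c := by
  rw [rspan, Submodule.span_le, Set.singleton_subset_iff]
  exact mem_rspan_iff

lemma rspan_le_of_eq {R : Type*} [Ring R] {a c r : R} (h : a * r = c) :
    rspan R c ≤ rspan R a := rspan_le_iff.mpr ⟨r, h⟩

/-- A right coprime pair `(a,b)` is minimal in the poset of right coprime pairs
(ordered by inclusion of the cyclic right ideals, up to the evident equivalence)
iff there is an idempotent `e` with `aR = eR` and `bR = (1-e)R`. -/
theorem minimal_rightCoprime_iff_idempotent {R : Type*} [Ring R] (a b : R)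
    (hcop : ∃ r s : R, a * r + b * s = 1) :
    (∀ c d : R, (∃ r s : R, c * r + d * s = 1) →
        rspan R c ≤ rspan R a → rspan R d ≤ rspan R b →
        rspan R c = rspan R a ∧ rspan R d = rspan R b) ↔
      ∃ e : R, IsIdempotentElem e ∧ rspan R a = rspan R e ∧ rspan R b = rspan R (1 - e) := by
  obtain ⟨r, s, hrs⟩ := hcop
  constructor
  · intro H
    have hf : b * s = 1 - a * r := by rw [← hrs]; abel
    -- Step 1: pair (a*(r*a), b) is coprime, so rspan (a*(r*a)) = rspan a
    have step1 := H (a * (r * a)) b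
      ⟨r, s * (a * r) + s, by
        have h : a * (r * a) * r + b * (s * (a * r) + s) = (a * r + b * s) * (a * r) + b * s := by
          noncomm_ring
        rw [h, hrs, one_mul, hrs]⟩
      (rspan_le_of_eq rfl) le_rfl
    -- Step 2: pair (a, b*(s*b)) is coprime, so rspan (b*(s*b)) = rspan b
    have step2 := H a (b * (s * b))
      ⟨r + r * (b * s), s, by
        have h : a * (r + r * (b * s)) + b * (s * b) * s = a * r + (a * r + b * s) * (b * s) := by
          noncomm_ring
        rw [h, hrs, one_mul, hrs]⟩
      le_rfl (rspan_le_of_eq rfl)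
    -- a ∈ (a*r) R
    obtain ⟨w, hw⟩ : ∃ w : R, a * (r * a) * w = a := by
      rw [← mem_rspan_iff, step1.1, mem_rspan_iff]; exact ⟨1, mul_one a⟩
    -- b ∈ (b*s) R
    obtain ⟨w', hw'⟩ : ∃ w' : R, b * (s * b) * w' = b := by
      rw [← mem_rspan_iff, step2.2, mem_rspan_iff]; exact ⟨1, mul_one b⟩
    -- Step 3: pair (a*(r*(a*r)), b*(s*(1+a*r))) is coprime, so a*r ∈ (a*r)²R
    have step3 := H (a * (r * (a * r))) (b * (s * (1 + a * r)))
      ⟨1, 1, by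
        have h : a * (r * (a * r)) * 1 + b * (s * (1 + a * r)) * 1 =
            (a * r + b * s) * (1 + a * r) - a * r := by noncomm_ring
        rw [h, hrs]; noncomm_ring⟩
      (rspan_le_of_eq rfl) (rspan_le_of_eq rfl)
    obtain ⟨t, ht⟩ : ∃ t : R, a * (r * (a * r)) * t = a * r := by
      rw [← mem_rspan_iff, step3.1, mem_rspan_iff]; exact ⟨r, rfl⟩
    have he2 : (a * r) * (a * r) * t = a * r :=
      (by noncomm_ring : (a * r) * (a * r) * t = a * (r * (a * r)) * t).trans ht
    -- Step 4: pair (a*(r*(1+(b*s)*t)), b*(s*(1-(a*r)*t))) is coprime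
    have step4 := H (a * (r * (1 + (b * s) * t))) (b * (s * (1 - (a * r) * t)))
      ⟨1, 1, by
        have h : a * (r * (1 + (b * s) * t)) * 1 + b * (s * (1 - (a * r) * t)) * 1 =
            (a * r + b * s) +
              ((a * r) * (a * r + b * s) - (a * r + b * s) * (a * r)) * t := by noncomm_ring
        rw [h, hrs]; noncomm_ring⟩
      (rspan_le_of_eq rfl) (rspan_le_of_eq rfl)
    obtain ⟨v, hv⟩ : ∃ v : R, b * (s * (1 - (a * r) * t)) * v = b * s := by
      rw [← mem_rspan_iff, step4.2, mem_rspan_iff]; exact ⟨s, rfl⟩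
    -- rewrite hv in terms of e := a*r
    have hv' : (1 - a * r) * (1 - (a * r) * t) * v = 1 - a * r := by
      have h1 : b * (s * (1 - (a * r) * t)) * v = (b * s) * (1 - (a * r) * t) * v := by
        noncomm_ring
      rw [h1, hf] at hv
      exact hv
    -- derive idempotency of e := a*r
    have hidem : IsIdempotentElem (a * r) := by
      have h0 : (a * r) * ((1 - a * r) * (1 - (a * r) * t) * v) = (a * r) * (1 - a * r) := by
        rw [hv']
      have hexp : (a * r) * ((1 - a * r) * (1 - (a * r) * t) * v) =
          ((a * r - (a * r) * (a * r)) -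
            ((a * r) * (a * r) * t - (a * r) * ((a * r) * (a * r) * t))) * v := by noncomm_ring
      rw [hexp, he2] at h0
      have h0' : (a * r) * (1 - a * r) = 0 := by
        rw [← h0]; noncomm_ring
      have hsub : a * r - (a * r) * (a * r) = 0 := by
        rw [← h0']; noncomm_ring
      exact (sub_eq_zero.mp hsub).symm
    refine ⟨a * r, hidem, ?_, ?_⟩
    · apply le_antisymm
      · rw [rspan_le_iff]
        refine ⟨a * w, ?_⟩
        calc (a * r) * (a * w) = a * (r * a) * w := by noncomm_ring
          _ = a := hw
      · exact rspan_le_of_eq rfl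
    · apply le_antisymm
      · rw [rspan_le_iff]
        refine ⟨b * w', ?_⟩
        calc (1 - a * r) * (b * w') = (b * s) * (b * w') := by rw [hf]
          _ = b * (s * b) * w' := by noncomm_ring
          _ = b := hw'
      · rw [rspan_le_iff]; exact ⟨s, hf⟩
  · rintro ⟨e, he, ha, hb⟩ c d ⟨r', s', h1⟩ hc hd
    obtain ⟨x, hx⟩ : ∃ x : R, e * x = c := by
      rw [← mem_rspan_iff]
      exact (hc.trans_eq ha) (mem_rspan_iff.mpr ⟨1, mul_one c⟩)
    obtain ⟨y, hy⟩ : ∃ y : R, (1 - e) * y = d := by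
      rw [← mem_rspan_iff]
      exact (hd.trans_eq hb) (mem_rspan_iff.mpr ⟨1, mul_one d⟩)
    have hec : e * c = c := by rw [← hx, ← mul_assoc, he.eq]
    have hed : e * d = 0 := by
      rw [← hy, ← mul_assoc]
      have h2 : e * (1 - e) = 0 := by rw [mul_sub, mul_one, he.eq, sub_self]
      rw [h2, zero_mul]
    have hfc : (1 - e) * c = 0 := by
      rw [sub_mul, one_mul, hec, sub_self]
    have hfd : (1 - e) * d = d := by
      rw [← hy, ← mul_assoc]
      have h2 : (1 - e) * (1 - e) = 1 - e := by
        rw [sub_mul, one_mul, mul_sub, mul_one, he.eq]; abel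
      rw [h2]
    constructor
    · apply le_antisymm hc
      rw [ha, rspan_le_iff]
      refine ⟨r', ?_⟩
      have h3 := congrArg (fun z => e * z) h1
      simp only [mul_add, ← mul_assoc, hec, hed, zero_mul, add_zero, mul_one] at h3
      exact h3
    · apply le_antisymm hd
      rw [hb, rspan_le_iff]
      refine ⟨s', ?_⟩
      have h3 := congrArg (fun z => (1 - e) * z) h1
      simp only [mul_add, ← mul_assoc, hfc, hfd, zero_mul, zero_add, mul_one] at h3
      exact h3
end

section
/- A descending chain of right coprime pairs {(a_i, b_i)} (indexed by a linear order, with a_jR ⊆ a_iR and b_jR ⊆ b_iR for i ≤ j) has a lower bound in the poset of right coprime pairs if and only if (⋂ᵢ a_iR) + (⋂ᵢ b_iR) = R. -/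
lemma mem_rspan_self {R : Type*} [Ring R] (a : R) : a ∈ rspan R a :=
  Submodule.mem_span_singleton_self a

lemma rspan_le_of_mem {R : Type*} [Ring R] {a : R} {M : Submodule Rᵐᵒᵖ R}
    (h : a ∈ M) : rspan R a ≤ M := by
  rw [rspan, Submodule.span_le, Set.singleton_subset_iff]; exact h

lemma mul_mem_rspan {R : Type*} [Ring R] (a r : R) : a * r ∈ rspan R a := by
  have : (MulOpposite.op r) • a ∈ rspan R a :=
    Submodule.smul_mem _ _ (mem_rspan_self a)
  simpa using this

/-- A descending chain of right coprime pairs `{(aᵢ, bᵢ)}` has a lower bound in the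
poset of right coprime pairs iff `(⋂ᵢ aᵢR) + (⋂ᵢ bᵢR) = R`. -/
theorem chain_has_lowerBound_iff {R I : Type*} [Ring R] [LinearOrder I] (a b : I → R)
    (hcop : ∀ i, ∃ r s : R, a i * r + b i * s = 1)
    (hdesc : ∀ i j, i ≤ j → rspan R (a j) ≤ rspan R (a i) ∧ rspan R (b j) ≤ rspan R (b i)) :
    (∃ c d : R, (∃ r s : R, c * r + d * s = 1) ∧
        ∀ i, rspan R c ≤ rspan R (a i) ∧ rspan R d ≤ rspan R (b i)) ↔
      (⨅ i, rspan R (a i)) ⊔ (⨅ i, rspan R (b i)) = ⊤ := by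
  constructor
  · rintro ⟨c, d, ⟨r, s, hrs⟩, h⟩
    rw [eq_top_iff]
    intro x _
    have hc : c * r ∈ ⨅ i, rspan R (a i) :=
      Submodule.mem_iInf _ |>.mpr fun i => (h i).1 (mul_mem_rspan c r)
    have hd : d * s ∈ ⨅ i, rspan R (b i) :=
      Submodule.mem_iInf _ |>.mpr fun i => (h i).2 (mul_mem_rspan d s)
    have h1 : (1 : R) ∈ (⨅ i, rspan R (a i)) ⊔ (⨅ i, rspan R (b i)) := by
      rw [← hrs]; exact Submodule.add_mem_sup hc hd
    have : x = MulOpposite.op x • (1 : R) := by simp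
    rw [this]
    exact Submodule.smul_mem _ _ h1
  · intro htop
    have h1 : (1 : R) ∈ (⨅ i, rspan R (a i)) ⊔ (⨅ i, rspan R (b i)) := htop ▸ trivial
    obtain ⟨c, hc, d, hd, hcd⟩ := Submodule.mem_sup.mp h1
    refine ⟨c, d, ⟨1, 1, by simpa using hcd⟩, fun i => ?_⟩
    exact ⟨rspan_le_of_mem (Submodule.mem_iInf _ |>.mp hc i),
      rspan_le_of_mem (Submodule.mem_iInf _ |>.mp hd i)⟩
end

section
/- Let (a,b) be a right coprime pair in R with aR ∩ bR ⊆ J(R). Then (aR + J(R)) ∩ (bR + J(R)) ⊆ J(R). -/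
/-- If `(a,b)` is a right coprime pair with `aR ∩ bR ⊆ J(R)`, then
`(aR + J(R)) ∩ (bR + J(R)) ⊆ J(R)`, where `J(R) = Ideal.jacobson ⊥` is the
Jacobson radical. -/
theorem inter_sub_jacobson {R : Type*} [Ring R] (a b : R)
    (hcop : ∃ r s : R, a * r + b * s = 1)
    (h : ∀ x : R, (∃ t : R, x = a * t) → (∃ t : R, x = b * t) →
      x ∈ Ideal.jacobson (⊥ : Ideal R)) :
    ∀ x : R,
      (∃ t : R, ∃ j ∈ Ideal.jacobson (⊥ : Ideal R), x = a * t + j) →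
      (∃ t : R, ∃ j ∈ Ideal.jacobson (⊥ : Ideal R), x = b * t + j) →
      x ∈ Ideal.jacobson (⊥ : Ideal R) := by
  obtain ⟨r, s0, hrs⟩ := hcop
  set J := Ideal.jacobson (⊥ : Ideal R) with hJ
  rintro x ⟨t, j, hj, hx⟩ ⟨s, j', hj', hx'⟩
  have har : a * r = 1 - b * s0 := eq_sub_iff_add_eq.mpr hrs
  have e1 : a * (t - r * (a * t)) = b * (s0 * (a * t)) := by
    rw [mul_sub, ← mul_assoc, har]; noncomm_ring
  have e2 : a * (r * (b * s)) = b * (s - s0 * (b * s)) := by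
    rw [← mul_assoc, har]; noncomm_ring
  have hab : b * (s0 * (a * t)) ∈ J := h _ ⟨t - r * (a * t), e1.symm⟩ ⟨s0 * (a * t), rfl⟩
  have hba : a * (r * (b * s)) ∈ J := h _ ⟨r * (b * s), rfl⟩ ⟨s - s0 * (b * s), e2⟩
  have hjj : a * (r * (j' - j)) ∈ J := by
    have := J.smul_mem (a * r) (J.sub_mem hj' hj)
    simpa [smul_eq_mul, mul_assoc] using this
  have hbs : b * s = a * t + j - j' := by
    rw [hx] at hx'
    rw [eq_sub_iff_add_eq, hx']
  have key : x = a * (r * (b * s)) + a * (r * (j' - j)) + b * (s0 * (a * t)) + j := by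
    rw [← e1, hbs, hx]; noncomm_ring
  rw [key]
  exact J.add_mem (J.add_mem (J.add_mem hba hjj) hab) hj
end

section
/- Let V be a countably infinite dimensional vector space over a division ring D with basis {v_n : n < ω}, S = End_D(V), e_n ∈ S the projection onto D·v_n along the other basis vectors, and p ∈ S the endomorphism sending each v_n to v_0. Then (⊕_{n<ω} S e_n) ∩ S p = 0, and consequently for each m the pair (1 - Σ_{n≤m} e_n, 1 - p) is a right coprime pair in S; moreover no idempotent e ∈ S satisfies eS ⊆ (1 - Σ_{n≤m} e_n)S and (1-e)S ⊆ (1-p)S for all m < ω (i.e. the descending chain of these right coprime pairs has no minimal lower bound of the form (e, 1-e)). -/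
/-- Let `V` be a vector space over a division ring `D` with basis `{vₙ : n < ω}`,
`S = End_D(V)`, `eₙ ∈ S` the projection onto `D·vₙ` along the other basis vectors and
`p ∈ S` the endomorphism sending each `vₙ` to `v₀`. Then `(⊕ₙ S eₙ) ∩ S p = 0`; hence
each `(1 - Σ_{n≤m} eₙ, 1 - p)` is a right coprime pair in `S`, and no idempotent `e ∈ S`
satisfies `eS ⊆ (1 - Σ_{n≤m} eₙ)S` for all `m` and `(1-e)S ⊆ (1-p)S`, i.e. this
descending chain of right coprime pairs has no minimal lower bound. -/
theorem endVectorSpace_chain_no_minimal_lowerBound {D V : Type*} [DivisionRing D]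
    [AddCommGroup V] [Module D V] (v : Module.Basis ℕ D V)
    (en : ℕ → Module.End D V) (p : Module.End D V)
    (hen : ∀ n i : ℕ, en n (v i) = if i = n then v n else 0)
    (hp : ∀ n : ℕ, p (v n) = v 0) :
    ((⨆ n : ℕ, Submodule.span (Module.End D V) {en n}) ⊓
        Submodule.span (Module.End D V) {p} = ⊥) ∧
    (∀ m : ℕ, ∃ r s : Module.End D V,
        (1 - ∑ n ∈ Finset.range (m + 1), en n) * r + (1 - p) * s = 1) ∧
    ¬ ∃ e : Module.End D V, IsIdempotentElem e ∧
        (∀ m : ℕ, ∃ x : Module.End D V,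
          e = (1 - ∑ n ∈ Finset.range (m + 1), en n) * x) ∧
        (∃ y : Module.End D V, 1 - e = (1 - p) * y) := by
  -- the partial sums `E_m = ∑_{n ≤ m} en n` kill `v (m+1)`
  have hE : ∀ m : ℕ, (∑ n ∈ Finset.range (m + 1), en n) (v (m + 1)) = 0 := by
    intro m
    rw [LinearMap.coe_sum, Finset.sum_apply]
    refine Finset.sum_eq_zero fun n hn => ?_
    rw [hen, if_neg (by simp at hn; omega)]
  -- `en n` picks out the `n`-th coordinate
  have hkey : ∀ (u : V) (n : ℕ), en n u = v.repr u n • v n := by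
    intro u n
    conv_lhs => rw [← v.linearCombination_repr u]
    rw [Finsupp.linearCombination_apply, map_finsuppSum]
    have hcongr : ((v.repr u).sum fun i a => en n (a • v i)) =
        (v.repr u).sum fun i a => if i = n then a • v n else 0 :=
      Finsupp.sum_congr fun i _ => by rw [map_smul, hen]; split_ifs <;> simp
    rw [hcongr, Finsupp.sum_ite_eq' (v.repr u) n (fun _ a => a • v n)]
    split_ifs with h
    · rfl
    · rw [Finsupp.notMem_support_iff.mp h, zero_smul]
  refine ⟨?_, ?_, ?_⟩
  · -- intersection is zero
    rw [eq_bot_iff]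
    intro x hx
    rw [Submodule.mem_inf] at hx
    obtain ⟨hx1, hx2⟩ := hx
    rw [Submodule.mem_span_singleton] at hx2
    obtain ⟨q, rfl⟩ := hx2
    rw [← Submodule.span_range_eq_iSup, Finsupp.mem_span_range_iff_exists_finsupp] at hx1
    obtain ⟨c, hc⟩ := hx1
    set N : ℕ := c.support.sup id + 1 with hN
    have hvanish : (q • p) (v N) = 0 := by
      rw [← hc, Finsupp.sum, LinearMap.coe_sum, Finset.sum_apply]
      refine Finset.sum_eq_zero fun n hn => ?_
      have hne : N ≠ n := by
        have : n ≤ c.support.sup id := Finset.le_sup (f := id) hn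
        omega
      rw [smul_eq_mul, Module.End.mul_apply, hen, if_neg hne, map_zero]
    have hq0 : q (v 0) = 0 := by
      have : (q • p) (v N) = q (v 0) := by
        rw [smul_eq_mul, Module.End.mul_apply, hp]
      rw [this] at hvanish; exact hvanish
    have : q • p = 0 := by
      refine v.ext fun i => ?_
      rw [smul_eq_mul, Module.End.mul_apply, hp, hq0, LinearMap.zero_apply]
    rw [this]; exact Submodule.zero_mem ⊥
  · -- coprimality
    intro m
    set r : Module.End D V := v.constr ℕ fun _ => v (m + 1) with hr
    refine ⟨r, 1 - r, ?_⟩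
    refine v.ext fun i => ?_
    have hri : r (v i) = v (m + 1) := v.constr_basis ℕ _ i
    simp only [LinearMap.add_apply, Module.End.mul_apply, LinearMap.sub_apply,
      Module.End.one_apply, hri, map_sub, hE, hp]
    abel
  · -- no minimal lower bound
    rintro ⟨e, _, hx, y, hy⟩
    have he0 : e = 0 := by
      ext w
      have hcoord : ∀ n, v.repr (e w) n = 0 := by
        intro n
        obtain ⟨x, hxe⟩ := hx n
        have h1 : en n (e w) = 0 := by
          rw [hxe, Module.End.mul_apply, LinearMap.sub_apply, Module.End.one_apply,
            map_sub]
          -- en n ((1 - E_n) u) = en n u - en n (E_n u) = 0, since en n ∘ E_n = en n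
          have : ∀ u : V, en n ((∑ k ∈ Finset.range (n + 1), en k) u) = en n u := by
            intro u
            rw [LinearMap.coe_sum, Finset.sum_apply, map_sum]
            rw [Finset.sum_eq_single n]
            · simp [hkey u n, hen]
            · intro k hk hkn
              rw [hkey u k, map_smul, hen, if_neg hkn, smul_zero]
            · intro h; exact absurd (Finset.self_mem_range_succ n) h
          rw [this, sub_self]
        have h2 := (hkey (e w) n).symm.trans h1
        have hvn : (v n : V) ≠ 0 := v.ne_zero n
        rcases smul_eq_zero.mp h2 with h | h
        · exact h
        · exact absurd h hvn
      have : v.repr (e w) = 0 := Finsupp.ext hcoord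
      have := congrArg v.repr.symm this
      simpa using this
    rw [he0, sub_zero] at hy
    -- p is idempotent, so p * (1 - p) = 0, hence p = p * 1 = 0; contradiction
    have hpp : p * p = p := by
      refine v.ext fun i => ?_
      rw [Module.End.mul_apply, hp, hp]
    have hp0 : p = 0 := by
      calc p = p * 1 := (mul_one p).symm
        _ = p * ((1 - p) * y) := by rw [← hy]
        _ = (p * (1 - p)) * y := by rw [mul_assoc]
        _ = 0 := by rw [mul_sub, mul_one, hpp, sub_self, zero_mul]
    have : p (v 0) = v 0 := hp 0
    rw [hp0] at this
    exact v.ne_zero 0 this.symm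
end
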